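/- arXiv:2002.10816 — 3 statements merged into one kernel-verified Lean document; each statement's English description precedes it below -/
import Mathlib

section
/- Let p, d, N be positive integers, Σ_p ∈ ℝ^{p×p} symmetric positive definite, λ > 0, θ ∈ ℝ^d, and Φ_1, …, Φ_N ∈ ℝ^{p×d}, η_1, …, η_N ∈ ℝ^p. Suppose y_n = Φ_n θ + η_n for n = 1, …, N, and define G_{N,λ} = Σ_{n=1}^N Φ_nᵀ Σ_p^{-1} Φ_n + λ I_d and θ_{N,λ} = G_{N,λ}^{-1} Σ_{n=1}^N Φ_nᵀ Σ_p^{-1} y_n. Then ‖θ_{N,λ} − θ‖_{G_{N,λ}} ≤ ‖Σ_{n=1}^N Φ_nᵀ Σ_p^{-1} η_n‖_{G_{N,λ}^{-1}} + λ ‖θ‖_{G_{N,λ}^{-1}}, where ‖x‖_M = √(xᵀ M x). -/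
open Matrix Finset

/-!
By the normal equations, `θ_{N,λ} − θ = G⁻¹ (v − λ θ)` with `v = Σ_n Φ_nᵀ Σ_p⁻¹ η_n`, and
`‖G⁻¹ w‖_G = ‖w‖_{G⁻¹}`. The bound is then the triangle inequality for the seminorm
`‖·‖_{G⁻¹}`, which comes from the positive definite matrix `G⁻¹`.
-/

namespace Matrix

variable {m n : Type*} [Fintype m] [Fintype n]

theorem PosSemidef.sqrt_dotProduct_mulVec_sub_le {M : Matrix n n ℝ} (hM : M.PosSemidef)
    (x y : n → ℝ) :
    √((x - y) ⬝ᵥ M *ᵥ (x - y)) ≤ √(x ⬝ᵥ M *ᵥ x) + √(y ⬝ᵥ M *ᵥ y) := by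
  simp only [dotProduct_comm _ (M *ᵥ _)]
  -- `√(xᵀ M x)` is, definitionally, the norm of `M.toSeminormedAddCommGroup hM`.
  exact @norm_sub_le _ (M.toSeminormedAddCommGroup hM).toSeminormedAddGroup x y

theorem sqrt_smul_dotProduct_mulVec_smul (M : Matrix n n ℝ) (c : ℝ) (x : n → ℝ) :
    √((c • x) ⬝ᵥ M *ᵥ (c • x)) = |c| * √(x ⬝ᵥ M *ᵥ x) := by
  rw [mulVec_smul, smul_dotProduct, dotProduct_smul, smul_eq_mul, smul_eq_mul, ← mul_assoc,
    Real.sqrt_mul (mul_self_nonneg c), Real.sqrt_mul_self_eq_abs]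

theorem inv_mulVec_dotProduct_mulVec_inv_mulVec [DecidableEq n] {R : Type*} [CommRing R]
    {G : Matrix n n R} (hG : IsUnit G.det) (w : n → R) :
    G⁻¹ *ᵥ w ⬝ᵥ G *ᵥ (G⁻¹ *ᵥ w) = w ⬝ᵥ G⁻¹ *ᵥ w := by
  rw [mulVec_mulVec, mul_nonsing_inv G hG, one_mulVec, dotProduct_comm]

theorem posDef_sum_transpose_mul_mul_add_smul_one [DecidableEq n] {ι : Type*} (s : Finset ι)
    {S : Matrix m m ℝ} (hS : S.PosSemidef) (Φ : ι → Matrix m n ℝ) {lam : ℝ} (hlam : 0 < lam) :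
    (∑ i ∈ s, (Φ i)ᵀ * S * Φ i + lam • (1 : Matrix n n ℝ)).PosDef := by
  refine PosDef.posSemidef_add (posSemidef_sum s fun i _ => ?_) (PosDef.one.smul hlam)
  simpa only [conjTranspose_eq_transpose_of_trivial] using hS.conjTranspose_mul_mul_same (Φ i)

theorem inv_mulVec_mulVec_add_sub_eq [DecidableEq n] {R : Type*} [CommRing R]
    {G A : Matrix n n R} (hG : IsUnit G.det) {lam : R} (hGA : G = A + lam • 1) (θ v : n → R) :
    G⁻¹ *ᵥ (A *ᵥ θ + v) - θ = G⁻¹ *ᵥ (v - lam • θ) := by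
  have hA : A *ᵥ θ + v = G *ᵥ θ + (v - lam • θ) := by
    rw [hGA, add_mulVec, smul_mulVec, one_mulVec]
    abel
  rw [hA, mulVec_add, mulVec_mulVec, nonsing_inv_mul G hG, one_mulVec, add_sub_cancel_left]

end Matrix

theorem stmt_5_general (p d N : ℕ)
    (Sp : Matrix (Fin p) (Fin p) ℝ) (hSp : Sp.PosDef)
    (lam : ℝ) (hlam : 0 < lam)
    (θ : Fin d → ℝ)
    (Φ : Fin N → Matrix (Fin p) (Fin d) ℝ)
    (η : Fin N → Fin p → ℝ)
    (y : Fin N → Fin p → ℝ)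
    (hy : ∀ n, y n = (Φ n).mulVec θ + η n)
    (G : Matrix (Fin d) (Fin d) ℝ)
    (hG : G = (∑ n : Fin N, (Φ n)ᵀ * Sp⁻¹ * Φ n) + lam • (1 : Matrix (Fin d) (Fin d) ℝ))
    (θhat : Fin d → ℝ)
    (hθhat : θhat = G⁻¹.mulVec (∑ n : Fin N, (Φ n)ᵀ.mulVec (Sp⁻¹.mulVec (y n)))) :
    Real.sqrt ((θhat - θ) ⬝ᵥ G.mulVec (θhat - θ)) ≤
      Real.sqrt ((∑ n : Fin N, (Φ n)ᵀ.mulVec (Sp⁻¹.mulVec (η n))) ⬝ᵥ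
          G⁻¹.mulVec (∑ n : Fin N, (Φ n)ᵀ.mulVec (Sp⁻¹.mulVec (η n))))
        + lam * Real.sqrt (θ ⬝ᵥ G⁻¹.mulVec θ) := by
  set v := ∑ n : Fin N, (Φ n)ᵀ *ᵥ (Sp⁻¹ *ᵥ η n)
  have hGpd : G.PosDef :=
    hG ▸ posDef_sum_transpose_mul_mul_add_smul_one _ hSp.posSemidef.inv Φ hlam
  have hdet : IsUnit G.det := isUnit_iff_ne_zero.mpr hGpd.det_pos.ne'
  have hnormal : ∑ n : Fin N, (Φ n)ᵀ *ᵥ (Sp⁻¹ *ᵥ y n)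
      = (∑ n : Fin N, (Φ n)ᵀ * Sp⁻¹ * Φ n) *ᵥ θ + v := by
    simp only [v, hy, mulVec_add, sum_add_distrib, sum_mulVec, mulVec_mulVec, Matrix.mul_assoc]
  have herror : θhat - θ = G⁻¹ *ᵥ (v - lam • θ) := by
    rw [hθhat, hnormal, inv_mulVec_mulVec_add_sub_eq hdet hG]
  calc √((θhat - θ) ⬝ᵥ G *ᵥ (θhat - θ)) = √((v - lam • θ) ⬝ᵥ G⁻¹ *ᵥ (v - lam • θ)) := by
        rw [herror, inv_mulVec_dotProduct_mulVec_inv_mulVec hdet]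
    _ ≤ √(v ⬝ᵥ G⁻¹ *ᵥ v) + √((lam • θ) ⬝ᵥ G⁻¹ *ᵥ (lam • θ)) :=
        hGpd.inv.posSemidef.sqrt_dotProduct_mulVec_sub_le v (lam • θ)
    _ = √(v ⬝ᵥ G⁻¹ *ᵥ v) + lam * √(θ ⬝ᵥ G⁻¹ *ᵥ θ) := by
        rw [sqrt_smul_dotProduct_mulVec_smul, abs_of_pos hlam]

/-- Deterministic error decomposition for the regularised least-squares estimator:
`‖θ_{N,λ} − θ‖_{G_{N,λ}} ≤ ‖Σ_n Φ_nᵀ Σ_p⁻¹ η_n‖_{G_{N,λ}⁻¹} + λ ‖θ‖_{G_{N,λ}⁻¹}`. -/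
theorem stmt_5 (p d N : ℕ) (hp : 0 < p) (hd : 0 < d) (hN : 0 < N)
    (Sp : Matrix (Fin p) (Fin p) ℝ) (hSp : Sp.PosDef)
    (lam : ℝ) (hlam : 0 < lam)
    (θ : Fin d → ℝ)
    (Φ : Fin N → Matrix (Fin p) (Fin d) ℝ)
    (η : Fin N → Fin p → ℝ)
    (y : Fin N → Fin p → ℝ)
    (hy : ∀ n, y n = (Φ n).mulVec θ + η n)
    (G : Matrix (Fin d) (Fin d) ℝ)
    (hG : G = (∑ n : Fin N, (Φ n)ᵀ * Sp⁻¹ * Φ n) + lam • (1 : Matrix (Fin d) (Fin d) ℝ))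
    (θhat : Fin d → ℝ)
    (hθhat : θhat = G⁻¹.mulVec (∑ n : Fin N, (Φ n)ᵀ.mulVec (Sp⁻¹.mulVec (y n)))) :
    Real.sqrt ((θhat - θ) ⬝ᵥ G.mulVec (θhat - θ)) ≤
      Real.sqrt ((∑ n : Fin N, (Φ n)ᵀ.mulVec (Sp⁻¹.mulVec (η n))) ⬝ᵥ
          G⁻¹.mulVec (∑ n : Fin N, (Φ n)ᵀ.mulVec (Sp⁻¹.mulVec (η n))))
        + lam * Real.sqrt (θ ⬝ᵥ G⁻¹.mulVec θ) :=
  stmt_5_general p d N Sp hSp lam hlam θ Φ η y hy G hG θhat hθhat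
end

section
/- Let A, A̲, Ā ∈ ℝ^{p×p} with A̲ ≤ A ≤ Ā entrywise, B ∈ ℝ^{p×q}, D ∈ ℝ^{p×r}, and let u : [t₀,∞) → ℝ^q and ω, ω̲, ω̄ : [t₀,∞) → ℝ^r be continuous with ω̲(t) ≤ ω(t) ≤ ω̄(t) componentwise for all t ≥ t₀. Let x : [t₀,∞) → ℝ^p be continuously differentiable with ẋ(t) = A x(t) + B u(t) + D ω(t), and let x̲, x̄ : [t₀,∞) → ℝ^p be continuously differentiable solutions of ẋ̲(t) = A̲⁺ x̲⁺(t) − Ā⁺ x̲⁻(t) − A̲⁻ x̄⁺(t) + Ā⁻ x̄⁻(t) + B u(t) + D⁺ ω̲(t) − D⁻ ω̄(t) and ẋ̄(t) = Ā⁺ x̄⁺(t) − A̲⁺ x̄⁻(t) − Ā⁻ x̲⁺(t) + A̲⁻ x̲⁻(t) + B u(t) + D⁺ ω̄(t) − D⁻ ω̲(t), with x̲(t₀) = x̄(t₀) = x(t₀). Then x̲(t) ≤ x(t) ≤ x̄(t) componentwise for all t ≥ t₀. -/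
/-!
The deviations `x̲ - x` and `x - x̄` obey a cooperative differential inequality. The predictor's
right-hand sides are nondecreasing in `x̲`, nonincreasing in `x̄`, and `z ↦ z⁺`, `z ↦ z⁻` are
1-Lipschitz; together with `A̲ x⁺ - Ā x⁻ ≤ A x` and `D⁺ ω̲ - D⁻ ω̄ ≤ D ω` this shows that
whenever all deviations are at most `M ≥ 0`, each of their derivatives is at most `K M`, where
`K = ∑ᵢⱼ (|A̲ᵢⱼ| + |Āᵢⱼ|)`. Grönwall's inequality for the maximum of `0` and the deviations, which
vanishes at `t₀`, keeps it at `0`. The upper bound is the lower bound of the negated system.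
-/

open Matrix

/-- Entrywise positive part of a matrix: `A⁺ = max(A, 0)`. -/
def matPos {m n : Type*} (A : Matrix m n ℝ) : Matrix m n ℝ := fun i j => max (A i j) 0

/-- Entrywise negative part of a matrix: `A⁻ = A⁺ − A`. -/
def matNeg {m n : Type*} (A : Matrix m n ℝ) : Matrix m n ℝ := matPos A - A

/-- Componentwise positive part of a vector: `x⁺ = max(x, 0)`. -/
def vecPos {n : Type*} (x : n → ℝ) : n → ℝ := fun i => max (x i) 0

/-- Componentwise negative part of a vector: `x⁻ = x⁺ − x`. -/
def vecNeg {n : Type*} (x : n → ℝ) : n → ℝ := vecPos x - x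

open Finset Set Filter Topology

theorem le_gronwallBound_of_deriv_right_le_mul_upperBound {ι : Type*} [Fintype ι] [Nonempty ι]
    {f f' : ι → ℝ → ℝ} {δ K ε a b : ℝ}
    (hf : ∀ i, ContinuousOn (f i) (Icc a b))
    (hf' : ∀ i, ∀ t ∈ Ico a b, HasDerivWithinAt (f i) (f' i t) (Ici t) t)
    (ha : ∀ i, f i a ≤ δ)
    (bound : ∀ t ∈ Ico a b, ∀ M, (∀ j, f j t ≤ M) → ∀ i, f' i t ≤ K * M + ε) :
    ∀ t ∈ Icc a b, ∀ i, f i t ≤ gronwallBound δ K ε (t - a) := by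
  set Φ : ℝ → ℝ := fun t => univ.sup' univ_nonempty fun j => f j t
  have le_Φ : ∀ t i, f i t ≤ Φ t := fun t i => le_sup' (fun j => f j t) (mem_univ i)
  have slope_Φ : ∀ t ∈ Ico a b, ∀ r, K * Φ t + ε < r →
      ∃ᶠ z in 𝓝[>] t, (z - t)⁻¹ * (Φ z - Φ t) < r := by
    intro t ht r hr
    have slope_lt : ∀ᶠ z in 𝓝[>] t, ∀ i, slope (f i) t z < r :=
      eventually_all.2 fun i => ((hf' i t ht).Ioi_of_Ici.limsup_slope_le' (lt_irrefl t)
        ((bound t ht _ (le_Φ t) i).trans_lt hr))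
    refine (slope_lt.and self_mem_nhdsWithin).mono (fun z ⟨hslope, htz⟩ => ?_) |>.frequently
    have hzt : 0 < z - t := sub_pos.2 htz
    rw [inv_mul_lt_iff₀ hzt, sub_lt_iff_lt_add', sup'_lt_iff]
    intro i _
    have := hslope i
    rw [slope_def_field, div_lt_iff₀ hzt] at this
    linarith [le_Φ t i]
  intro t ht i
  exact (le_Φ t i).trans <| le_gronwallBound_of_liminf_deriv_right_le
    (ContinuousOn.finset_sup'_apply _ fun i _ => hf i) slope_Φ
    (sup'_le _ _ fun i _ => ha i) (fun _ _ => le_rfl) t ht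

theorem nonpos_of_hasDerivWithinAt_le_mul_upperBound {ι : Type*} [Fintype ι]
    {v v' : ι → ℝ → ℝ} {K a : ℝ} (hK : 0 ≤ K)
    (hv : ∀ i, ∀ t ∈ Ici a, HasDerivWithinAt (v i) (v' i t) (Ici a) t)
    (ha : ∀ i, v i a ≤ 0)
    (bound : ∀ t ∈ Ici a, ∀ M, 0 ≤ M → (∀ j, v j t ≤ M) → ∀ i, v' i t ≤ K * M) :
    ∀ t ∈ Ici a, ∀ i, v i t ≤ 0 := by
  intro t ht i
  -- adjoining the zero function makes the common upper bound `M` nonnegative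
  let f : Option ι → ℝ → ℝ := fun o => o.elim 0 v
  let f' : Option ι → ℝ → ℝ := fun o s => o.elim 0 fun j => v' j s
  have key := le_gronwallBound_of_deriv_right_le_mul_upperBound (f := f) (f' := f') (δ := 0)
    (K := K) (ε := 0) (b := t) ?cont ?deriv ?init ?bound t ⟨ht, le_rfl⟩ (some i)
  · simpa [f, gronwallBound_ε0_δ0] using key
  case cont =>
    rintro (_ | j)
    · exact continuousOn_const
    · exact fun s hs => (hv j s hs.1).continuousWithinAt.mono Icc_subset_Ici_self
  case deriv =>
    rintro (_ | j) s hs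
    · exact hasDerivWithinAt_const _ _ _
    · exact (hv j s hs.1).mono (Ici_subset_Ici.2 hs.1)
  case init =>
    rintro (_ | j)
    exacts [le_rfl, ha j]
  case bound =>
    intro s hs M hM
    rintro (_ | j)
    · simpa [f'] using mul_nonneg hK (hM none)
    · simpa [f'] using bound s hs.1 M (hM none) (fun j => hM (some j)) j

-- The predictor's lower end of the interval product `[alo, ahi] · [xl, xh]`, with `xl ≤ x ≤ xh`
-- relaxed by `M`.
theorem lowerIntervalProduct_le {alo a ahi xl x xh M : ℝ} (hlo : alo ≤ a) (hhi : a ≤ ahi)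
    (hM : 0 ≤ M) (hl : xl - x ≤ M) (hh : x - xh ≤ M) :
    max alo 0 * max xl 0 - max ahi 0 * max (-xl) 0 - max (-alo) 0 * max xh 0
      + max (-ahi) 0 * max (-xh) 0 ≤ a * x + (|alo| + |ahi|) * M := by
  have pos_le : ∀ {y z : ℝ}, y - z ≤ M → max y 0 ≤ max z 0 + M := fun {y z} h =>
    max_le (by linarith [le_max_left z 0]) (by linarith [le_max_right z 0])
  have e1 := mul_le_mul_of_nonneg_left (pos_le hl) (le_max_right alo 0)
  have e2 := mul_le_mul_of_nonneg_left (pos_le (show -x - -xl ≤ M by linarith))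
    (le_max_right ahi 0)
  have e3 := mul_le_mul_of_nonneg_left (pos_le hh) (le_max_right (-alo) 0)
  have e4 := mul_le_mul_of_nonneg_left (pos_le (show -xh - -x ≤ M by linarith))
    (le_max_right (-ahi) 0)
  have c1 := mul_le_mul_of_nonneg_right hlo (le_max_right x 0)
  have c2 := mul_le_mul_of_nonneg_right hhi (le_max_right (-x) 0)
  have hx := max_zero_sub_max_neg_zero_eq_self x
  have halo := max_zero_sub_max_neg_zero_eq_self alo
  have hahi := max_zero_sub_max_neg_zero_eq_self ahi
  have habs_lo := max_zero_add_max_neg_zero_eq_abs_self alo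
  have habs_hi := max_zero_add_max_neg_zero_eq_abs_self ahi
  -- the left side is at most `alo x⁺ - ahi x⁻ + (|alo| + |ahi|) M`, and `alo x⁺ - ahi x⁻ ≤ a x`
  linear_combination e1 + e2 + e3 + e4 + c1 + c2 + a * hx + max x 0 * halo - max (-x) 0 * hahi
    + M * habs_lo + M * habs_hi

theorem vecNeg_eq_vecPos_neg {n : Type*} (x : n → ℝ) : vecNeg x = vecPos (-x) := by
  ext i
  simp only [vecNeg, vecPos, Pi.sub_apply, Pi.neg_apply]
  linarith [max_zero_sub_max_neg_zero_eq_self (x i)]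

theorem matNeg_eq_matPos_neg {m n : Type*} (A : Matrix m n ℝ) : matNeg A = matPos (-A) := by
  ext i j
  simp only [matNeg, matPos, Matrix.sub_apply, Matrix.neg_apply]
  linarith [max_zero_sub_max_neg_zero_eq_self (A i j)]

section Predictor

variable {m n k l : Type*} [Fintype n] [Fintype k] [Fintype l]

-- Right-hand side of the lower predictor; with both pairs of bounds swapped, of the upper one.
def predictorField (Alo Ahi : Matrix m n ℝ) (B : Matrix m k ℝ) (D : Matrix m l ℝ)
    (xl xh : n → ℝ) (u : k → ℝ) (wl wh : l → ℝ) : m → ℝ :=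
  matPos Alo *ᵥ vecPos xl - matPos Ahi *ᵥ vecNeg xl - matNeg Alo *ᵥ vecPos xh
    + matNeg Ahi *ᵥ vecNeg xh + B *ᵥ u + matPos D *ᵥ wl - matNeg D *ᵥ wh

theorem predictorField_swap_eq_neg (Alo Ahi : Matrix m n ℝ) (B : Matrix m k ℝ) (D : Matrix m l ℝ)
    (xl xh : n → ℝ) (u : k → ℝ) (wl wh : l → ℝ) :
    predictorField Ahi Alo B D xh xl u wh wl
      = -predictorField Alo Ahi B D (-xh) (-xl) (-u) (-wh) (-wl) := by
  simp only [predictorField, vecNeg_eq_vecPos_neg, neg_neg, mulVec_neg]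
  abel

theorem predictorField_sub_le {Alo A Ahi : Matrix m n ℝ}
    (hA : ∀ i j, Alo i j ≤ A i j ∧ A i j ≤ Ahi i j) (B : Matrix m k ℝ) (D : Matrix m l ℝ)
    {xl x xh : n → ℝ} {M : ℝ} (hM : 0 ≤ M) (hl : ∀ j, xl j - x j ≤ M)
    (hh : ∀ j, x j - xh j ≤ M) (u : k → ℝ) {wl w wh : l → ℝ}
    (hw : ∀ j, wl j ≤ w j ∧ w j ≤ wh j) (i : m) :
    (predictorField Alo Ahi B D xl xh u wl wh - (A *ᵥ x + B *ᵥ u + D *ᵥ w)) i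
      ≤ (∑ j, (|Alo i j| + |Ahi i j|)) * M := by
  have hAx := sum_le_sum fun j (_ : j ∈ Finset.univ) =>
    lowerIntervalProduct_le (hA i j).1 (hA i j).2 hM (hl j) (hh j)
  have hDw : ∑ j, (max (D i j) 0 * wl j - max (-D i j) 0 * wh j) ≤ ∑ j, D i j * w j := by
    refine sum_le_sum fun j _ => ?_
    linear_combination mul_le_mul_of_nonneg_left (hw j).1 (le_max_right (D i j) 0)
      + mul_le_mul_of_nonneg_left (hw j).2 (le_max_right (-D i j) 0)
      + w j * max_zero_sub_max_neg_zero_eq_self (D i j)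
  simp only [predictorField, vecNeg_eq_vecPos_neg, matNeg_eq_matPos_neg, Pi.add_apply,
    Pi.sub_apply, mulVec, dotProduct, matPos, vecPos, Matrix.neg_apply, Pi.neg_apply,
    sum_mul] at hAx hDw ⊢
  simp only [sum_add_distrib, sum_sub_distrib] at hAx hDw ⊢
  linarith

theorem sub_predictorField_le {Alo A Ahi : Matrix m n ℝ}
    (hA : ∀ i j, Alo i j ≤ A i j ∧ A i j ≤ Ahi i j) (B : Matrix m k ℝ) (D : Matrix m l ℝ)
    {xl x xh : n → ℝ} {M : ℝ} (hM : 0 ≤ M) (hl : ∀ j, xl j - x j ≤ M)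
    (hh : ∀ j, x j - xh j ≤ M) (u : k → ℝ) {wl w wh : l → ℝ}
    (hw : ∀ j, wl j ≤ w j ∧ w j ≤ wh j) (i : m) :
    (A *ᵥ x + B *ᵥ u + D *ᵥ w - predictorField Ahi Alo B D xh xl u wh wl) i
      ≤ (∑ j, (|Alo i j| + |Ahi i j|)) * M := by
  have := predictorField_sub_le hA B D (xl := -xh) (x := -x) (xh := -xl) hM
    (fun j => by simp only [Pi.neg_apply]; linarith [hh j])
    (fun j => by simp only [Pi.neg_apply]; linarith [hl j]) (-u)
    (wl := -wh) (w := -w) (wh := -wl)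
    (fun j => by simp only [Pi.neg_apply, neg_le_neg_iff]; exact (hw j).symm) i
  rw [predictorField_swap_eq_neg]
  convert this using 1
  simp only [mulVec_neg, Pi.sub_apply, Pi.add_apply, Pi.neg_apply]
  ring

end Predictor

theorem stmt_7_general (p q r : ℕ)
    (A Alo Ahi : Matrix (Fin p) (Fin p) ℝ)
    (hA : ∀ i j, Alo i j ≤ A i j ∧ A i j ≤ Ahi i j)
    (B : Matrix (Fin p) (Fin q) ℝ) (D : Matrix (Fin p) (Fin r) ℝ)
    (t₀ : ℝ) (u : ℝ → Fin q → ℝ) (w wlo whi : ℝ → Fin r → ℝ)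
    (hwle : ∀ t ∈ Set.Ici t₀, ∀ i, wlo t i ≤ w t i ∧ w t i ≤ whi t i)
    (x xlo xhi : ℝ → Fin p → ℝ)
    (hx : ∀ t ∈ Set.Ici t₀, HasDerivWithinAt x
      (A.mulVec (x t) + B.mulVec (u t) + D.mulVec (w t)) (Set.Ici t₀) t)
    (hxlo : ∀ t ∈ Set.Ici t₀, HasDerivWithinAt xlo
      ((matPos Alo).mulVec (vecPos (xlo t)) - (matPos Ahi).mulVec (vecNeg (xlo t))
        - (matNeg Alo).mulVec (vecPos (xhi t)) + (matNeg Ahi).mulVec (vecNeg (xhi t))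
        + B.mulVec (u t) + (matPos D).mulVec (wlo t) - (matNeg D).mulVec (whi t))
      (Set.Ici t₀) t)
    (hxhi : ∀ t ∈ Set.Ici t₀, HasDerivWithinAt xhi
      ((matPos Ahi).mulVec (vecPos (xhi t)) - (matPos Alo).mulVec (vecNeg (xhi t))
        - (matNeg Ahi).mulVec (vecPos (xlo t)) + (matNeg Alo).mulVec (vecNeg (xlo t))
        + B.mulVec (u t) + (matPos D).mulVec (whi t) - (matNeg D).mulVec (wlo t))
      (Set.Ici t₀) t)
    (hinit : xlo t₀ = x t₀ ∧ xhi t₀ = x t₀) :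
    ∀ t ∈ Set.Ici t₀, ∀ i, xlo t i ≤ x t i ∧ x t i ≤ xhi t i := by
  set K := ∑ i, ∑ j, (|Alo i j| + |Ahi i j|)
  have hrow : ∀ i, ∑ j, (|Alo i j| + |Ahi i j|) ≤ K := fun i =>
    single_le_sum (f := fun i => ∑ j, (|Alo i j| + |Ahi i j|)) (fun _ _ => by positivity)
      (mem_univ i)
  have key := nonpos_of_hasDerivWithinAt_le_mul_upperBound (K := K) (by positivity)
    (v := Sum.elim (fun i t => xlo t i - x t i) (fun i t => x t i - xhi t i))
    (v' := Sum.elim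
      (fun i t => (predictorField Alo Ahi B D (xlo t) (xhi t) (u t) (wlo t) (whi t)
        - (A *ᵥ x t + B *ᵥ u t + D *ᵥ w t)) i)
      (fun i t => (A *ᵥ x t + B *ᵥ u t + D *ᵥ w t
        - predictorField Ahi Alo B D (xhi t) (xlo t) (u t) (whi t) (wlo t)) i))
    (by
      rintro (i | i) t ht
      · exact (hasDerivWithinAt_pi.1 (hxlo t ht) i).sub (hasDerivWithinAt_pi.1 (hx t ht) i)
      · exact (hasDerivWithinAt_pi.1 (hx t ht) i).sub (hasDerivWithinAt_pi.1 (hxhi t ht) i))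
    (by rintro (i | i) <;> simp [hinit])
    (by
      rintro t ht M hM hdev (i | i)
      · exact (predictorField_sub_le hA B D hM (fun j => hdev (.inl j)) (fun j => hdev (.inr j))
          (u t) (hwle t ht) i).trans (mul_le_mul_of_nonneg_right (hrow i) hM)
      · exact (sub_predictorField_le hA B D hM (fun j => hdev (.inl j)) (fun j => hdev (.inr j))
          (u t) (hwle t ht) i).trans (mul_le_mul_of_nonneg_right (hrow i) hM))
  exact fun t ht i => ⟨sub_nonpos.1 (key t ht (.inl i)), sub_nonpos.1 (key t ht (.inr i))⟩

/-- Interval predictor of Efimov et al. (2012): for a linear system with state matrix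
enclosed entrywise in `[A̲, Ā]` and disturbance enclosed in `[ω̲, ω̄]`, the interval
predictor encloses the true trajectory componentwise. -/
theorem stmt_7 (p q r : ℕ)
    (A Alo Ahi : Matrix (Fin p) (Fin p) ℝ)
    (hA : ∀ i j, Alo i j ≤ A i j ∧ A i j ≤ Ahi i j)
    (B : Matrix (Fin p) (Fin q) ℝ) (D : Matrix (Fin p) (Fin r) ℝ)
    (t₀ : ℝ) (u : ℝ → Fin q → ℝ) (w wlo whi : ℝ → Fin r → ℝ)
    (hu : ContinuousOn u (Set.Ici t₀)) (hw : ContinuousOn w (Set.Ici t₀))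
    (hwlo : ContinuousOn wlo (Set.Ici t₀)) (hwhi : ContinuousOn whi (Set.Ici t₀))
    (hwle : ∀ t ∈ Set.Ici t₀, ∀ i, wlo t i ≤ w t i ∧ w t i ≤ whi t i)
    (x xlo xhi : ℝ → Fin p → ℝ)
    (hx : ∀ t ∈ Set.Ici t₀, HasDerivWithinAt x
      (A.mulVec (x t) + B.mulVec (u t) + D.mulVec (w t)) (Set.Ici t₀) t)
    (hxlo : ∀ t ∈ Set.Ici t₀, HasDerivWithinAt xlo
      ((matPos Alo).mulVec (vecPos (xlo t)) - (matPos Ahi).mulVec (vecNeg (xlo t))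
        - (matNeg Alo).mulVec (vecPos (xhi t)) + (matNeg Ahi).mulVec (vecNeg (xhi t))
        + B.mulVec (u t) + (matPos D).mulVec (wlo t) - (matNeg D).mulVec (whi t))
      (Set.Ici t₀) t)
    (hxhi : ∀ t ∈ Set.Ici t₀, HasDerivWithinAt xhi
      ((matPos Ahi).mulVec (vecPos (xhi t)) - (matPos Alo).mulVec (vecNeg (xhi t))
        - (matNeg Ahi).mulVec (vecPos (xlo t)) + (matNeg Alo).mulVec (vecNeg (xlo t))
        + B.mulVec (u t) + (matPos D).mulVec (whi t) - (matNeg D).mulVec (wlo t))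
      (Set.Ici t₀) t)
    (hinit : xlo t₀ = x t₀ ∧ xhi t₀ = x t₀) :
    ∀ t ∈ Set.Ici t₀, ∀ i, xlo t i ≤ x t i ∧ x t i ≤ xhi t i :=
  stmt_7_general p q r A Alo Ahi hA B D t₀ u w wlo whi hwle x xlo xhi hx hxlo hxhi hinit
end

section
/- Let A₀, ΔA_1, …, ΔA_M ∈ ℝ^{p×p} with A₀ Metzler (all off-diagonal entries nonnegative), and let A = A₀ + Σ_{i=1}^M α_i ΔA_i for some α_1, …, α_M ≥ 0 with Σ_{i=1}^M α_i = 1. Set ΔA₊ = Σ_{i=1}^M ΔA_i⁺ and ΔA₋ = Σ_{i=1}^M ΔA_i⁻. Let B ∈ ℝ^{p×q}, D ∈ ℝ^{p×r}, and u : [t₀,∞) → ℝ^q, ω, ω̲, ω̄ : [t₀,∞) → ℝ^r continuous with ω̲(t) ≤ ω(t) ≤ ω̄(t) componentwise. Let x : [t₀,∞) → ℝ^p be continuously differentiable with ẋ(t) = A x(t) + B u(t) + D ω(t), and let x̲, x̄ be continuously differentiable solutions of ẋ̲(t) = A₀ x̲(t) − ΔA₊ x̲⁻(t) − ΔA₋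 x̄⁺(t) + B u(t) + D⁺ ω̲(t) − D⁻ ω̄(t) and ẋ̄(t) = A₀ x̄(t) + ΔA₊ x̄⁺(t) + ΔA₋ x̲⁻(t) + B u(t) + D⁺ ω̄(t) − D⁻ ω̲(t), with x̲(t₀) = x̄(t₀) = x(t₀). Then x̲(t) ≤ x(t) ≤ x̄(t) componentwise for all t ≥ t₀. -/
open Matrix Finset

/-!
The errors `e = x - x̲` and `f = x̄ - x` obey a quasi-monotone differential inequality: whenever a
component of `e` (or `f`) is nonpositive, its derivative is at least `-(C (e⁻, f⁻))` in that
component, for one fixed matrix `C`. In the `A₀`-term the off-diagonal entries are nonnegative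
(Metzler) and the diagonal one multiplies the nonpositive component itself; the polytope term is
controlled by `(∑ αᵢ ΔAᵢ)^± ≤ ΔA±` together with `x⁻ ≤ x̲⁻ + e⁻` and `x⁺ ≤ x̄⁺ + f⁻`; the
disturbance terms are nonnegative because `ω̲ ≤ ω ≤ ω̄`. Hence `m = ∑ (eᵢ⁻ + fᵢ⁻)` has right
derivative at most `K m` and vanishes at `t₀`, so it vanishes identically by Grönwall's inequality.
-/

open Set Filter Topology

lemma posPart_sub_self {α : Type*} [Lattice α] [AddCommGroup α] [AddLeftMono α] (a : α) :
    a⁺ - a = a⁻ := by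
  nth_rewrite 2 [← posPart_sub_negPart a]
  exact sub_sub_cancel _ _

lemma negPart_add_le (a b : ℝ) : (a + b)⁻ ≤ a⁻ + b⁻ :=
  max_le (by linarith [neg_le_negPart a, neg_le_negPart b])
    (add_nonneg (negPart_nonneg a) (negPart_nonneg b))

lemma posPart_add_le (a b : ℝ) : (a + b)⁺ ≤ a⁺ + b⁺ :=
  max_le (add_le_add (le_posPart a) (le_posPart b))
    (add_nonneg (posPart_nonneg a) (posPart_nonneg b))

lemma negPart_mul_of_nonneg {c : ℝ} (hc : 0 ≤ c) (a : ℝ) : (c * a)⁻ = c * a⁻ := by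
  rw [negPart_def, negPart_def, mul_max_of_nonneg _ _ hc, mul_neg, mul_zero]

lemma neg_abs_mul_negPart_le_mul {a v : ℝ} (h : 0 ≤ a ∨ v ≤ 0) : -(|a| * v⁻) ≤ a * v := by
  rcases le_or_gt v 0 with hv | hv
  · rw [negPart_eq_neg.2 hv]
    nlinarith [mul_nonneg_of_nonpos_of_nonpos (sub_nonpos.2 (le_abs_self a)) hv]
  · rw [negPart_eq_zero.2 hv.le, mul_zero, neg_zero]
    exact mul_nonneg (h.resolve_right hv.not_ge) hv.le

lemma neg_le_mul_of_posPart_le_of_negPart_le {a b P N : ℝ} (hP : a⁺ ≤ P) (hN : a⁻ ≤ N) :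
    -(P * b⁻ + N * b⁺) ≤ a * b := by
  have : a * b = a⁺ * b⁺ + a⁻ * b⁻ - (a⁺ * b⁻ + a⁻ * b⁺) := by
    nth_rewrite 1 [← posPart_sub_negPart a, ← posPart_sub_negPart b]; ring
  rw [this]
  have := mul_le_mul hP le_rfl (negPart_nonneg b) ((posPart_nonneg a).trans hP)
  have := mul_le_mul hN le_rfl (posPart_nonneg b) ((negPart_nonneg a).trans hN)
  nlinarith [mul_nonneg (posPart_nonneg a) (posPart_nonneg b),
    mul_nonneg (negPart_nonneg a) (negPart_nonneg b)]

lemma posPart_mul_sub_negPart_mul_le_mul {d w wlo whi : ℝ} (hlo : wlo ≤ w) (hhi : w ≤ whi) :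
    d⁺ * wlo - d⁻ * whi ≤ d * w := by
  nth_rewrite 3 [← posPart_sub_negPart d]
  nlinarith [mul_le_mul_of_nonneg_left hlo (posPart_nonneg d),
    mul_le_mul_of_nonneg_left hhi (negPart_nonneg d)]

lemma posPart_sum_mul_le {κ : Type*} [Fintype κ] {α : κ → ℝ} (hα : ∀ k, α k ∈ Set.Icc 0 1)
    (d : κ → ℝ) : (∑ k, α k * d k)⁺ ≤ ∑ k, (d k)⁺ :=
  max_le (sum_le_sum fun k _ => (mul_le_mul_of_nonneg_left (le_posPart _) (hα k).1).trans
      (mul_le_of_le_one_left (posPart_nonneg _) (hα k).2))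
    (sum_nonneg fun _ _ => posPart_nonneg _)

lemma negPart_sum_mul_le {κ : Type*} [Fintype κ] {α : κ → ℝ} (hα : ∀ k, α k ∈ Set.Icc 0 1)
    (d : κ → ℝ) : (∑ k, α k * d k)⁻ ≤ ∑ k, (d k)⁻ := by
  simpa [← posPart_neg, ← sum_neg_distrib] using posPart_sum_mul_le hα (-d)

lemma vecPos_eq {n : Type*} (x : n → ℝ) : vecPos x = x⁺ := rfl

lemma vecNeg_eq {n : Type*} (x : n → ℝ) : vecNeg x = x⁻ := posPart_sub_self x

lemma matPos_apply {m n : Type*} (A : Matrix m n ℝ) (i : m) (j : n) :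
    matPos A i j = (A i j)⁺ := rfl

lemma matNeg_apply {m n : Type*} (A : Matrix m n ℝ) (i : m) (j : n) :
    matNeg A i j = (A i j)⁻ := posPart_sub_self (A i j)

lemma posPart_sum_smul_apply_le {m n κ : Type*} [Fintype κ] {α : κ → ℝ}
    (hα : ∀ k, α k ∈ Set.Icc 0 1) (Δ : κ → Matrix m n ℝ) (i : m) (j : n) :
    ((∑ k, α k • Δ k) i j)⁺ ≤ (∑ k, matPos (Δ k)) i j := by
  simpa [Matrix.sum_apply, matPos_apply] using posPart_sum_mul_le hα (fun k => Δ k i j)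

lemma negPart_sum_smul_apply_le {m n κ : Type*} [Fintype κ] {α : κ → ℝ}
    (hα : ∀ k, α k ∈ Set.Icc 0 1) (Δ : κ → Matrix m n ℝ) (i : m) (j : n) :
    ((∑ k, α k • Δ k) i j)⁻ ≤ (∑ k, matNeg (Δ k)) i j := by
  simpa [Matrix.sum_apply, matNeg_apply] using negPart_sum_mul_le hα (fun k => Δ k i j)

lemma HasDerivWithinAt.exists_negPart_Ici {f : ℝ → ℝ} {f' x : ℝ}
    (hf : HasDerivWithinAt f f' (Ici x) x) :
    ∃ d, HasDerivWithinAt (fun t => (f t)⁻) d (Ici x) x ∧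
      (f x ≤ 0 → d ≤ f'⁻) ∧ (0 < f x → d = 0) := by
  rcases lt_trichotomy (f x) 0 with hneg | hzero | hpos
  · have hev : (fun t => (f t)⁻) =ᶠ[𝓝[Ici x] x] fun t => -f t :=
      (hf.continuousWithinAt.eventually (eventually_lt_nhds hneg)).mono
        fun t ht => negPart_eq_neg.2 ht.le
    exact ⟨-f', hf.neg.congr_of_eventuallyEq hev (negPart_eq_neg.2 hneg.le),
      fun _ => neg_le_negPart f', fun h => absurd h hneg.not_gt⟩
  · refine ⟨f'⁻, ?_, fun _ => le_rfl, fun h => absurd hzero h.ne'⟩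
    have hslope := (hasDerivWithinAt_iff_tendsto_slope' self_notMem_Ioi).1 hf.Ioi_of_Ici
    rw [← hasDerivWithinAt_Ioi_iff_Ici, hasDerivWithinAt_iff_tendsto_slope' self_notMem_Ioi]
    refine ((continuous_negPart.tendsto f').comp hslope).congr' ?_
    filter_upwards [self_mem_nhdsWithin] with z hz
    simp only [Function.comp_apply, slope_def_field, hzero, sub_zero, negPart_zero, div_eq_inv_mul]
    exact negPart_mul_of_nonneg (inv_nonneg.2 (sub_nonneg.2 (le_of_lt hz))) _
  · have hev : (fun t => (f t)⁻) =ᶠ[𝓝[Ici x] x] fun _ => 0 :=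
      (hf.continuousWithinAt.eventually (eventually_gt_nhds hpos)).mono
        fun t ht => negPart_eq_zero.2 ht.le
    exact ⟨0, (hasDerivWithinAt_const x _ 0).congr_of_eventuallyEq hev
      (negPart_eq_zero.2 hpos.le), fun h => absurd h hpos.not_ge, fun _ => rfl⟩

lemma HasDerivWithinAt.sumElim {ι κ : Type*} {a : ℝ → ι → ℝ} {b : ℝ → κ → ℝ} {a' : ι → ℝ}
    {b' : κ → ℝ} {s : Set ℝ} {t : ℝ} (ha : HasDerivWithinAt a a' s t)
    (hb : HasDerivWithinAt b b' s t) :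
    HasDerivWithinAt (fun t => Sum.elim (a t) (b t)) (Sum.elim a' b') s t := by
  refine hasDerivWithinAt_pi.2 ?_
  rintro (i | k)
  exacts [hasDerivWithinAt_pi.1 ha i, hasDerivWithinAt_pi.1 hb k]

lemma mulVec_apply_le_sum_abs_mul_sum {m n : Type*} [Fintype m] [Fintype n]
    (c : Matrix m n ℝ) {v : n → ℝ} (hv : 0 ≤ v) (k : m) :
    (c *ᵥ v) k ≤ (∑ i, ∑ j, |c i j|) * ∑ j, v j := by
  rw [mulVec, dotProduct, mul_sum]
  refine sum_le_sum fun l _ => mul_le_mul_of_nonneg_right ?_ (hv l)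
  calc c k l ≤ |c k l| := le_abs_self _
    _ ≤ ∑ j, |c k j| := single_le_sum (fun j _ => abs_nonneg (c k j)) (mem_univ l)
    _ ≤ ∑ i, ∑ j, |c i j| :=
      single_le_sum (f := fun i => ∑ j, |c i j|)
        (fun i _ => sum_nonneg fun j _ => abs_nonneg _) (mem_univ k)

theorem nonneg_of_hasDerivWithinAt_of_neg_mulVec_negPart_le {ι : Type*} [Fintype ι]
    {g g' : ℝ → ι → ℝ} {t₀ : ℝ} (c : Matrix ι ι ℝ)
    (hg : ∀ t ∈ Ici t₀, HasDerivWithinAt g (g' t) (Ici t₀) t) (h₀ : 0 ≤ g t₀)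
    (hbound : ∀ t ∈ Ici t₀, ∀ k, g t k ≤ 0 → -(c *ᵥ (g t)⁻) k ≤ g' t k) :
    ∀ t ∈ Ici t₀, 0 ≤ g t := by
  set m : ℝ → ℝ := fun t => ∑ k, (g t k)⁻
  set C : ℝ := ∑ k, ∑ l, |c k l|
  have hm_nonneg : ∀ t, 0 ≤ m t := fun t => sum_nonneg fun k _ => negPart_nonneg _
  have hm_cont : ContinuousOn m (Ici t₀) := by
    have : ContinuousOn g (Ici t₀) := fun t ht => (hg t ht).continuousWithinAt
    exact continuousOn_finsetSum _ fun k _ =>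
      continuous_negPart.comp_continuousOn ((continuous_apply k).comp_continuousOn this)
  have hm_deriv : ∀ s ∈ Ici t₀, ∃ d, HasDerivWithinAt m d (Ici s) s ∧
      d ≤ (Fintype.card ι * C) * m s := by
    intro s hs
    have hgk : ∀ k, HasDerivWithinAt (fun t => g t k) (g' s k) (Ici s) s := fun k =>
      hasDerivWithinAt_pi.1 ((hg s hs).mono (Ici_subset_Ici.2 hs)) k
    choose d hd hd_nonpos hd_pos using fun k => (hgk k).exists_negPart_Ici
    refine ⟨∑ k, d k, HasDerivWithinAt.fun_sum fun k _ => hd k, ?_⟩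
    have hCm : 0 ≤ C * m s :=
      mul_nonneg (sum_nonneg fun _ _ => sum_nonneg fun _ _ => abs_nonneg _) (hm_nonneg s)
    have hdk : ∀ k, d k ≤ C * m s := by
      intro k
      rcases le_or_gt (g s k) 0 with hk | hk
      · refine (hd_nonpos k hk).trans (max_le ?_ hCm)
        exact (neg_le.1 (hbound s hs k hk)).trans
          (mulVec_apply_le_sum_abs_mul_sum c (negPart_nonneg _) k)
      · exact (hd_pos k hk).trans_le hCm
    calc ∑ k, d k ≤ ∑ _k : ι, C * m s := sum_le_sum fun k _ => hdk k
      _ = Fintype.card ι * C * m s := by rw [sum_const, card_univ, nsmul_eq_mul, mul_assoc]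
  choose! dm hdm hdm_le using hm_deriv
  have hm_zero : ∀ T ∈ Ici t₀, m T = 0 := by
    intro T hT
    have hm₀ : m t₀ ≤ 0 := (sum_eq_zero fun k _ => negPart_eq_zero.2 (h₀ k)).le
    have := le_gronwallBound_of_liminf_deriv_right_le (hm_cont.mono Icc_subset_Ici_self)
      (fun s hs r hr => (hdm s hs.1).liminf_right_slope_le hr) hm₀
      (fun s hs => (hdm_le s hs.1).trans_eq (add_zero _).symm) T ⟨hT, le_rfl⟩
    rw [gronwallBound_ε0_δ0] at this
    exact le_antisymm this (hm_nonneg T)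
  intro t ht k
  exact negPart_eq_zero.1 <|
    (sum_eq_zero_iff_of_nonneg fun k _ => negPart_nonneg _).1 (hm_zero t ht) k (mem_univ k)

def IsMetzler {n : Type*} (A : Matrix n n ℝ) : Prop := ∀ i j, i ≠ j → 0 ≤ A i j

section Enclosure

variable {n m l : Type*} [Fintype n] [Fintype l]

lemma IsMetzler.neg_mulVec_negPart_le {A : Matrix n n ℝ} (hA : IsMetzler A) {v : n → ℝ}
    {i : n} (hi : v i ≤ 0) : -((A.map abs *ᵥ v⁻) i) ≤ (A *ᵥ v) i := by
  simp only [mulVec, dotProduct, map_apply, Pi.negPart_apply, ← sum_neg_distrib]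
  refine sum_le_sum fun j _ => neg_abs_mul_negPart_le_mul ?_
  rcases eq_or_ne i j with rfl | hij
  · exact Or.inr hi
  · exact Or.inl (hA i j hij)

lemma neg_mulVec_negPart_le_mulVec_add {G P N : Matrix m n ℝ} (hP : ∀ i j, (G i j)⁺ ≤ P i j)
    (hN : ∀ i j, (G i j)⁻ ≤ N i j) (x lo hi : n → ℝ) :
    -(P *ᵥ (x - lo)⁻ + N *ᵥ (hi - x)⁻) ≤ G *ᵥ x + P *ᵥ lo⁻ + N *ᵥ hi⁺ := by
  intro i
  simp only [Pi.add_apply, Pi.neg_apply, mulVec, dotProduct, Pi.negPart_apply,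
    Pi.posPart_apply, Pi.sub_apply, ← sum_add_distrib, ← sum_neg_distrib]
  refine sum_le_sum fun j _ => ?_
  have hneg : (x j)⁻ ≤ (lo j)⁻ + (x j - lo j)⁻ := by
    simpa using negPart_add_le (lo j) (x j - lo j)
  have hpos : (x j)⁺ ≤ (hi j)⁺ + (hi j - x j)⁻ := by
    simpa [← posPart_neg] using posPart_add_le (hi j) (x j - hi j)
  have hPn := (posPart_nonneg _).trans (hP i j)
  have hNn := (negPart_nonneg _).trans (hN i j)
  nlinarith [neg_le_mul_of_posPart_le_of_negPart_le (b := x j) (hP i j) (hN i j),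
    mul_le_mul_of_nonneg_left hneg hPn, mul_le_mul_of_nonneg_left hpos hNn]

lemma matPos_mulVec_sub_matNeg_mulVec_le (D : Matrix m l ℝ) {w wlo whi : l → ℝ}
    (hlo : wlo ≤ w) (hhi : w ≤ whi) : matPos D *ᵥ wlo - matNeg D *ᵥ whi ≤ D *ᵥ w := by
  intro i
  simp only [Pi.sub_apply, mulVec, dotProduct, matPos_apply, matNeg_apply, ← sum_sub_distrib]
  exact sum_le_sum fun j _ => posPart_mul_sub_negPart_mul_le_mul (hlo j) (hhi j)

end Enclosure

section Predictor

variable {n m l : Type*} [Fintype n] [Fintype m] [Fintype l]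
  {A₀ G P N : Matrix n n ℝ} {B : Matrix n m ℝ} {D : Matrix n l ℝ}
  {x lo hi : n → ℝ} {u : m → ℝ} {w wlo whi : l → ℝ}

lemma lower_gap_rhs_ge (hA₀ : IsMetzler A₀) (hP : ∀ i j, (G i j)⁺ ≤ P i j)
    (hN : ∀ i j, (G i j)⁻ ≤ N i j) (hwlo : wlo ≤ w) (hwhi : w ≤ whi) {i : n}
    (hxi : x i - lo i ≤ 0) :
    -(((A₀.map abs + P) *ᵥ (x - lo)⁻ + N *ᵥ (hi - x)⁻) i) ≤
      ((A₀ + G) *ᵥ x + B *ᵥ u + D *ᵥ w - (A₀ *ᵥ lo - P *ᵥ lo⁻ - N *ᵥ hi⁺ + B *ᵥ u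
        + matPos D *ᵥ wlo - matNeg D *ᵥ whi)) i := by
  have hsplit : (A₀ + G) *ᵥ x + B *ᵥ u + D *ᵥ w - (A₀ *ᵥ lo - P *ᵥ lo⁻ - N *ᵥ hi⁺ + B *ᵥ u
      + matPos D *ᵥ wlo - matNeg D *ᵥ whi) = A₀ *ᵥ (x - lo) + (G *ᵥ x + P *ᵥ lo⁻ + N *ᵥ hi⁺)
        + (D *ᵥ w - (matPos D *ᵥ wlo - matNeg D *ᵥ whi)) := by
    rw [add_mulVec, mulVec_sub]; abel
  have hA := hA₀.neg_mulVec_negPart_le (v := x - lo) hxi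
  have hG := neg_mulVec_negPart_le_mulVec_add hP hN x lo hi i
  have hD := sub_nonneg.2 (matPos_mulVec_sub_matNeg_mulVec_le D hwlo hwhi) i
  rw [hsplit]
  simp only [add_mulVec, Pi.add_apply, Pi.neg_apply, Pi.sub_apply, Pi.zero_apply] at hA hG hD ⊢
  linarith

/-- The upper predictor is the lower predictor of the system with state `-x`, inputs `-u`, `-w`,
and the roles of the two bounds exchanged. -/
lemma upper_gap_rhs_ge (hA₀ : IsMetzler A₀) (hP : ∀ i j, (G i j)⁺ ≤ P i j)
    (hN : ∀ i j, (G i j)⁻ ≤ N i j) (hwlo : wlo ≤ w) (hwhi : w ≤ whi) {i : n}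
    (hxi : hi i - x i ≤ 0) :
    -((N *ᵥ (x - lo)⁻ + (A₀.map abs + P) *ᵥ (hi - x)⁻) i) ≤
      (A₀ *ᵥ hi + P *ᵥ hi⁺ + N *ᵥ lo⁻ + B *ᵥ u + matPos D *ᵥ whi - matNeg D *ᵥ wlo
        - ((A₀ + G) *ᵥ x + B *ᵥ u + D *ᵥ w)) i := by
  have key := lower_gap_rhs_ge (x := -x) (lo := -hi) (hi := -lo) (B := B) (D := D) (u := -u)
    hA₀ hP hN (neg_le_neg hwhi) (neg_le_neg hwlo) (i := i) (by simpa [add_comm] using hxi)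
  rw [neg_sub_neg, neg_sub_neg, negPart_neg, posPart_neg] at key
  simp only [mulVec_neg] at key
  rw [add_comm (N *ᵥ _)]
  exact key.trans_eq (congrFun (by abel) i)

end Predictor

theorem stmt_8_general (p q r M : ℕ)
    (A₀ : Matrix (Fin p) (Fin p) ℝ)
    (hMetzler : ∀ i j, i ≠ j → 0 ≤ A₀ i j)
    (ΔA : Fin M → Matrix (Fin p) (Fin p) ℝ)
    (α : Fin M → ℝ) (hα : ∀ i, 0 ≤ α i) (hα1 : ∑ i, α i = 1)
    (A : Matrix (Fin p) (Fin p) ℝ) (hA : A = A₀ + ∑ i, α i • ΔA i)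
    (ΔAp ΔAm : Matrix (Fin p) (Fin p) ℝ)
    (hΔAp : ΔAp = ∑ i, matPos (ΔA i)) (hΔAm : ΔAm = ∑ i, matNeg (ΔA i))
    (B : Matrix (Fin p) (Fin q) ℝ) (D : Matrix (Fin p) (Fin r) ℝ)
    (t₀ : ℝ) (u : ℝ → Fin q → ℝ) (w wlo whi : ℝ → Fin r → ℝ)
    (hwle : ∀ t ∈ Set.Ici t₀, ∀ i, wlo t i ≤ w t i ∧ w t i ≤ whi t i)
    (x xlo xhi : ℝ → Fin p → ℝ)
    (hx : ∀ t ∈ Set.Ici t₀, HasDerivWithinAt x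
      (A.mulVec (x t) + B.mulVec (u t) + D.mulVec (w t)) (Set.Ici t₀) t)
    (hxlo : ∀ t ∈ Set.Ici t₀, HasDerivWithinAt xlo
      (A₀.mulVec (xlo t) - ΔAp.mulVec (vecNeg (xlo t)) - ΔAm.mulVec (vecPos (xhi t))
        + B.mulVec (u t) + (matPos D).mulVec (wlo t) - (matNeg D).mulVec (whi t))
      (Set.Ici t₀) t)
    (hxhi : ∀ t ∈ Set.Ici t₀, HasDerivWithinAt xhi
      (A₀.mulVec (xhi t) + ΔAp.mulVec (vecPos (xhi t)) + ΔAm.mulVec (vecNeg (xlo t))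
        + B.mulVec (u t) + (matPos D).mulVec (whi t) - (matNeg D).mulVec (wlo t))
      (Set.Ici t₀) t)
    (hinit : xlo t₀ = x t₀ ∧ xhi t₀ = x t₀) :
    ∀ t ∈ Set.Ici t₀, ∀ i, xlo t i ≤ x t i ∧ x t i ≤ xhi t i := by
  subst hA
  have hα' : ∀ k, α k ∈ Set.Icc 0 1 := fun k =>
    ⟨hα k, hα1 ▸ single_le_sum (fun i _ => hα i) (mem_univ k)⟩
  have hP : ∀ i j, ((∑ k, α k • ΔA k) i j)⁺ ≤ ΔAp i j :=
    hΔAp ▸ posPart_sum_smul_apply_le hα' ΔA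
  have hN : ∀ i j, ((∑ k, α k • ΔA k) i j)⁻ ≤ ΔAm i j :=
    hΔAm ▸ negPart_sum_smul_apply_le hα' ΔA
  have hw : ∀ t ∈ Set.Ici t₀, wlo t ≤ w t ∧ w t ≤ whi t := fun t ht =>
    ⟨fun j => (hwle t ht j).1, fun j => (hwle t ht j).2⟩
  simp only [vecPos_eq, vecNeg_eq] at hxlo hxhi
  have key := nonneg_of_hasDerivWithinAt_of_neg_mulVec_negPart_le
    (g := fun t => Sum.elim (x t - xlo t) (xhi t - x t))
    (fromBlocks (A₀.map abs + ΔAp) ΔAm ΔAm (A₀.map abs + ΔAp))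
    (fun t ht => ((hx t ht).sub (hxlo t ht)).sumElim ((hxhi t ht).sub (hx t ht)))
    (by rintro (i | i) <;> simp [hinit])
    (by
      rintro t ht (i | i) hk <;> rw [fromBlocks_mulVec]
      · exact lower_gap_rhs_ge hMetzler hP hN (hw t ht).1 (hw t ht).2 hk
      · exact upper_gap_rhs_ge hMetzler hP hN (hw t ht).1 (hw t ht).2 hk)
  intro t ht i
  exact ⟨sub_nonneg.1 (key t ht (.inl i)), sub_nonneg.1 (key t ht (.inr i))⟩

/-- Enhanced interval predictor of Leurent et al. (2019): for a linear system whose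
state matrix lies in a polytope with Metzler centre `A₀`, the enhanced interval
predictor encloses the true trajectory componentwise. -/
theorem stmt_8 (p q r M : ℕ)
    (A₀ : Matrix (Fin p) (Fin p) ℝ)
    (hMetzler : ∀ i j, i ≠ j → 0 ≤ A₀ i j)
    (ΔA : Fin M → Matrix (Fin p) (Fin p) ℝ)
    (α : Fin M → ℝ) (hα : ∀ i, 0 ≤ α i) (hα1 : ∑ i, α i = 1)
    (A : Matrix (Fin p) (Fin p) ℝ) (hA : A = A₀ + ∑ i, α i • ΔA i)
    (ΔAp ΔAm : Matrix (Fin p) (Fin p) ℝ)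
    (hΔAp : ΔAp = ∑ i, matPos (ΔA i)) (hΔAm : ΔAm = ∑ i, matNeg (ΔA i))
    (B : Matrix (Fin p) (Fin q) ℝ) (D : Matrix (Fin p) (Fin r) ℝ)
    (t₀ : ℝ) (u : ℝ → Fin q → ℝ) (w wlo whi : ℝ → Fin r → ℝ)
    (hu : ContinuousOn u (Set.Ici t₀)) (hw : ContinuousOn w (Set.Ici t₀))
    (hwlo : ContinuousOn wlo (Set.Ici t₀)) (hwhi : ContinuousOn whi (Set.Ici t₀))
    (hwle : ∀ t ∈ Set.Ici t₀, ∀ i, wlo t i ≤ w t i ∧ w t i ≤ whi t i)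
    (x xlo xhi : ℝ → Fin p → ℝ)
    (hx : ∀ t ∈ Set.Ici t₀, HasDerivWithinAt x
      (A.mulVec (x t) + B.mulVec (u t) + D.mulVec (w t)) (Set.Ici t₀) t)
    (hxlo : ∀ t ∈ Set.Ici t₀, HasDerivWithinAt xlo
      (A₀.mulVec (xlo t) - ΔAp.mulVec (vecNeg (xlo t)) - ΔAm.mulVec (vecPos (xhi t))
        + B.mulVec (u t) + (matPos D).mulVec (wlo t) - (matNeg D).mulVec (whi t))
      (Set.Ici t₀) t)
    (hxhi : ∀ t ∈ Set.Ici t₀, HasDerivWithinAt xhi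
      (A₀.mulVec (xhi t) + ΔAp.mulVec (vecPos (xhi t)) + ΔAm.mulVec (vecNeg (xlo t))
        + B.mulVec (u t) + (matPos D).mulVec (whi t) - (matNeg D).mulVec (wlo t))
      (Set.Ici t₀) t)
    (hinit : xlo t₀ = x t₀ ∧ xhi t₀ = x t₀) :
    ∀ t ∈ Set.Ici t₀, ∀ i, xlo t i ≤ x t i ∧ x t i ≤ xhi t i :=
  stmt_8_general p q r M A₀ hMetzler ΔA α hα hα1 A hA ΔAp ΔAm hΔAp hΔAm B D t₀ u w wlo whi hwle x
    xlo xhi hx hxlo hxhi hinit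
end
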